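/- arXiv:1202.4942 — 5 statements merged into one kernel-verified Lean document; each statement's English description precedes it below -/
import Mathlib

section
/- Let Δ be an i-near-cone with apex sequence v_1, …, v_i, and suppose dim Δ ≥ 2i − 2 (i.e., Δ has a face of cardinality at least 2i − 1). Then {v_1, v_2, …, v_i} is a face of Δ. -/
/-!
Choose a face `σ` of `Δ` with `|σ| ≥ 2i - 1`. If `σ` already contains the apex `T = {v₁, …, vᵢ}`
we are done. Otherwise `σ` meets `T` in at most `i - 1` vertices, so `σ \ T` has at least `i`
vertices; it avoids every `vⱼ` and hence is a face of the last anti-star `Δ(i)`. Climbing back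
up, at level `j` the current face contains `{vⱼ₊₁, …, vᵢ}`, which has fewer than `i` elements, so
it has a vertex `w` outside this set, and the near-cone move `ρ ↦ (ρ \ {w}) ∪ {vⱼ}` keeps the
size and adds `vⱼ`. At level `0` we obtain a face of `Δ` containing `T`.
-/

open Finset

namespace Finset

lemma card_lt_card_sdiff_add_card {α : Type*} [DecidableEq α] {s t : Finset α}
    (h : ¬t ⊆ s) : #s < #(s \ t) + #t := by
  rw [card_sdiff_add_card]
  exact card_lt_card (left_lt_sup.mpr h)

end Finset

section NearCone

variable {α : Type*}

def IsNearCone [DecidableEq α] (F : Set (Finset α)) (a : α) : Prop :=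
  ∀ σ ∈ F, ∀ w ∈ σ, insert a (σ.erase w) ∈ F

lemma IsNearCone.exists_insert_subset_of_card_lt [DecidableEq α] {F : Set (Finset α)} {a : α}
    (hF : IsNearCone F a) {ρ T : Finset α} (hρ : ρ ∈ F) (hT : T ⊆ ρ) (hlt : #T < #ρ) :
    ∃ ρ' ∈ F, insert a T ⊆ ρ' ∧ #ρ ≤ #ρ' := by
  by_cases ha : a ∈ ρ
  · exact ⟨ρ, hρ, insert_subset ha hT, le_rfl⟩
  obtain ⟨w, hwρ, hwT⟩ := exists_mem_notMem_of_card_lt_card hlt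
  refine ⟨insert a (ρ.erase w), hF ρ hρ w hwρ, insert_subset_insert a ?_, ?_⟩
  · exact subset_erase.mpr ⟨hT, hwT⟩
  · rw [card_insert_of_notMem (fun h => ha (mem_of_mem_erase h)), card_erase_of_mem hwρ]
    omega

variable {D : ℕ → Set (Finset α)} {v : ℕ → α} {i : ℕ}

lemma mem_of_forall_notMem_apex (hast : ∀ j < i, D (j + 1) = {τ ∈ D j | v j ∉ τ})
    {τ : Finset α} (hτ : τ ∈ D 0) {j : ℕ} (hj : j ≤ i) (hv : ∀ k < j, v k ∉ τ) : τ ∈ D j := by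
  induction j with
  | zero => exact hτ
  | succ j ih =>
    rw [hast j hj]
    exact ⟨ih (by omega) fun k hk => hv k (by omega), hv j (by omega)⟩

lemma exists_apex_subset_of_mem [DecidableEq α] (hnc : ∀ j < i, IsNearCone (D j) (v j))
    (hast : ∀ j < i, D (j + 1) = {τ ∈ D j | v j ∉ τ}) {j : ℕ} (hj : j ≤ i) {ρ : Finset α}
    (hρ : ρ ∈ D j) (hT : (Ico j i).image v ⊆ ρ) (hcard : i ≤ #ρ) :
    ∃ ρ' ∈ D 0, (range i).image v ⊆ ρ' := by
  induction j generalizing ρ with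
  | zero => exact ⟨ρ, hρ, by rwa [range_eq_Ico]⟩
  | succ j ih =>
    have hρj : ρ ∈ D j := by
      rw [hast j hj] at hρ
      exact hρ.1
    have hTcard : #((Ico (j + 1) i).image v) < #ρ :=
      calc #((Ico (j + 1) i).image v) ≤ #(Ico (j + 1) i) := card_image_le
        _ < #ρ := by rw [Nat.card_Ico]; omega
    obtain ⟨ρ', hρ', hTρ', hle⟩ := (hnc j hj).exists_insert_subset_of_card_lt hρj hT hTcard
    rw [← image_insert, insert_Ico_add_one_left_eq_Ico hj] at hTρ'
    exact ih (by omega) hρ' hTρ' (hcard.trans hle)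

end NearCone

theorem apex_is_face_of_i_near_cone_general (i : ℕ) (Δ : Set (Finset ℕ))
    (D : ℕ → Set (Finset ℕ)) (v : ℕ → ℕ)
    (hD0 : D 0 = Δ)
    (hdown : ∀ j ≤ i, ∀ s ∈ D j, ∀ s' ⊆ s, s' ∈ D j)
    (hnc : ∀ j < i, ∀ σ ∈ D j, ∀ w ∈ σ, insert (v j) (σ.erase w) ∈ D j)
    (hast : ∀ j < i, D (j + 1) = {τ ∈ D j | v j ∉ τ})
    (hdim : ∃ σ ∈ Δ, 2 * i - 1 ≤ σ.card) :
    (Finset.range i).image v ∈ Δ := by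
  subst hD0
  obtain ⟨σ, hσ, hσcard⟩ := hdim
  set T := (range i).image v
  have hface : ∀ ρ ∈ D 0, T ⊆ ρ → T ∈ D 0 := fun ρ hρ => hdown 0 (Nat.zero_le i) ρ hρ T
  by_cases hTσ : T ⊆ σ
  · exact hface σ hσ hTσ
  have hσT : σ \ T ∈ D i :=
    mem_of_forall_notMem_apex hast (hdown 0 (Nat.zero_le i) σ hσ _ sdiff_subset) le_rfl
      fun k hk h => (mem_sdiff.mp h).2 (mem_image_of_mem v (mem_range.mpr hk))
  have hσTcard : i ≤ #(σ \ T) := by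
    have := card_lt_card_sdiff_add_card hTσ
    have : #T ≤ i := card_image_le.trans (card_range i).le
    omega
  obtain ⟨ρ, hρ, hTρ⟩ := exists_apex_subset_of_mem hnc hast le_rfl hσT (by simp) hσTcard
  exact hface ρ hρ hTρ

/-- If `Δ` is an `i`-near-cone with apex sequence `v 0, …, v (i-1)` and
`dim Δ ≥ 2i - 2` (i.e. `Δ` has a face of cardinality at least `2i - 1`),
then `{v 0, …, v (i-1)}` is a face of `Δ`. -/
theorem apex_is_face_of_i_near_cone (i : ℕ) (Δ : Set (Finset ℕ))
    (D : ℕ → Set (Finset ℕ)) (v : ℕ → ℕ)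
    (hD0 : D 0 = Δ)
    (hdown : ∀ j ≤ i, ∀ s ∈ D j, ∀ s' ⊆ s, s' ∈ D j)
    (hne : ∀ j ≤ i, (D j).Nonempty)
    (hvert : ∀ j < i, ({v j} : Finset ℕ) ∈ D j)
    (hnc : ∀ j < i, ∀ σ ∈ D j, ∀ w ∈ σ, insert (v j) (σ.erase w) ∈ D j)
    (hast : ∀ j < i, D (j + 1) = {τ ∈ D j | v j ∉ τ})
    (hdim : ∃ σ ∈ Δ, 2 * i - 1 ≤ σ.card) :
    (Finset.range i).image v ∈ Δ :=
  apex_is_face_of_i_near_cone_general i Δ D v hD0 hdown hnc hast hdim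
end

section
/- Let Δ be an i-near-cone on vertex set {v_1, …, v_n} with apex sequence v_1, …, v_i, and let k be the minimal cardinality of a facet of Δ. Then for every s ≤ k − i − 1, every face σ of Δ with |σ| ≤ s + 1, every j with 1 ≤ j ≤ i, and every t > j with v_t ∈ σ and v_j ∉ σ, the set (σ \ {v_t}) ∪ {v_j} is again a face of Δ of cardinality at most s + 1. -/
/-- `F` is a facet (maximal face) of the complex `Δ`. -/
def IsFacet (Δ : Finset (Finset ℕ)) (F : Finset ℕ) : Prop :=
  F ∈ Δ ∧ ∀ G ∈ Δ, F ⊆ G → F = G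

/-- Low skeleta of an `i`-near-cone are shifted with respect to the apex
sequence `v 1, …, v i`: for `s ≤ k - i - 1`, every face of cardinality at most
`s + 1`, every `1 ≤ j ≤ i` and `t > j` with `v t ∈ σ`, `v j ∉ σ`, the set
`(σ \ {v t}) ∪ {v j}` is a face of cardinality at most `s + 1`. -/
theorem skeleton_shifted_of_i_near_cone (n i k : ℕ) (Δ : Finset (Finset ℕ))
    (D : ℕ → Finset (Finset ℕ)) (v : ℕ → ℕ)
    (hinj : Set.InjOn v (Set.Icc 1 n))
    (hvert : ∀ σ ∈ Δ, ∀ x ∈ σ, ∃ m, 1 ≤ m ∧ m ≤ n ∧ v m = x)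
    (hin : i ≤ n)
    (hD0 : D 0 = Δ)
    (hdown : ∀ j ≤ i, ∀ s ∈ D j, ∀ s' ⊆ s, s' ∈ D j)
    (hne : ∀ j ≤ i, (D j).Nonempty)
    (hvmem : ∀ j, 1 ≤ j → j ≤ i → ({v j} : Finset ℕ) ∈ D (j - 1))
    (hnc : ∀ j, 1 ≤ j → j ≤ i →
      ∀ σ ∈ D (j - 1), ∀ w ∈ σ, insert (v j) (σ.erase w) ∈ D (j - 1))
    (hast : ∀ j, 1 ≤ j → j ≤ i → D j = (D (j - 1)).filter (fun τ => v j ∉ τ))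
    (hk₁ : ∀ F, IsFacet Δ F → k ≤ F.card)
    (hk₂ : ∃ F, IsFacet Δ F ∧ F.card = k) :
    ∀ s, s + i + 1 ≤ k → ∀ σ ∈ Δ, σ.card ≤ s + 1 →
      ∀ j t, 1 ≤ j → j ≤ i → j < t → t ≤ n → v t ∈ σ → v j ∉ σ →
        insert (v j) (σ.erase (v t)) ∈ Δ ∧
          (insert (v j) (σ.erase (v t))).card ≤ s + 1 := by
  classical
  have hinj' : ∀ a b, 1 ≤ a → a ≤ n → 1 ≤ b → b ≤ n → v a = v b → a = b := by
    intro a b ha1 ha2 hb1 hb2 h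
    exact hinj (Set.mem_Icc.mpr ⟨ha1, ha2⟩) (Set.mem_Icc.mpr ⟨hb1, hb2⟩) h
  have Dchar : ∀ m, m ≤ i → ∀ τ, τ ∈ D m ↔ τ ∈ Δ ∧ ∀ l, 1 ≤ l → l ≤ m → v l ∉ τ := by
    intro m
    induction m with
    | zero =>
      intro _ τ
      rw [hD0]
      exact ⟨fun h => ⟨h, fun l h1 h2 => ((by omega : False)).elim⟩, fun h => h.1⟩
    | succ m ih =>
      intro hm τ
      rw [hast (m+1) (by omega) hm]
      simp only [Nat.add_sub_cancel]
      rw [Finset.mem_filter, ih (by omega) τ]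
      constructor
      · rintro ⟨⟨h1, h2⟩, h3⟩
        refine ⟨h1, fun l hl1 hl2 => ?_⟩
        rcases Nat.lt_or_ge l (m+1) with h | h
        · exact h2 l hl1 (by omega)
        · have : l = m + 1 := by omega
          subst this; exact h3
      · rintro ⟨h1, h2⟩
        exact ⟨⟨h1, fun l hl1 hl2 => h2 l hl1 (by omega)⟩, h2 (m+1) (by omega) le_rfl⟩
  have hsub : ∀ m, m + 1 ≤ i → D (m+1) ⊆ D m := by
    intro m hm x hx
    rw [hast (m+1) (by omega) hm] at hx
    exact (Finset.mem_filter.mp hx).1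
  have exists_facet : ∀ m, m ≤ i → ∀ μ ∈ D m,
      ∃ F, μ ⊆ F ∧ F ∈ D m ∧ ∀ G ∈ D m, F ⊆ G → F = G := by
    intro m hm μ hμ
    have hne' : ((D m).filter (fun G => μ ⊆ G)).Nonempty :=
      ⟨μ, Finset.mem_filter.mpr ⟨hμ, Finset.Subset.refl μ⟩⟩
    obtain ⟨F, hFmem, hFmax⟩ := Finset.exists_max_image _ Finset.card hne'
    refine ⟨F, (Finset.mem_filter.mp hFmem).2, (Finset.mem_filter.mp hFmem).1, ?_⟩
    intro G hG hFG
    exact Finset.eq_of_subset_of_card_le hFG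
      (hFmax G (Finset.mem_filter.mpr ⟨hG, ((Finset.mem_filter.mp hFmem).2).trans hFG⟩))
  have facet_card : ∀ m, m ≤ i → ∀ F ∈ D m, (∀ G ∈ D m, F ⊆ G → F = G) → k ≤ F.card + m := by
    intro m
    induction m with
    | zero =>
      intro _ F hF hmax
      rw [hD0] at hF hmax
      have := hk₁ F ⟨hF, hmax⟩
      omega
    | succ m ih =>
      intro hm F hF hmax
      have hF' : F ∈ D m ∧ v (m+1) ∉ F := by
        rw [hast (m+1) (by omega) hm] at hF
        exact Finset.mem_filter.mp hF
      obtain ⟨F', hsubF, hF'mem, hF'max⟩ := exists_facet m (by omega) F hF'.1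
      have hk' : k ≤ F'.card + m := ih (by omega) F' hF'mem hF'max
      by_cases hv : v (m+1) ∈ F'
      · have hG : F'.erase (v (m+1)) ∈ D m :=
          hdown m (by omega) F' hF'mem _ (Finset.erase_subset _ _)
        have hGmem : F'.erase (v (m+1)) ∈ D (m+1) := by
          rw [hast (m+1) (by omega) hm]
          exact Finset.mem_filter.mpr ⟨hG, by simp⟩
        have hFG : F ⊆ F'.erase (v (m+1)) := by
          intro x hx
          exact Finset.mem_erase.mpr ⟨fun h => hF'.2 (h ▸ hx), hsubF hx⟩
        have heq := hmax _ hGmem hFG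
        have hcard : (F'.erase (v (m+1))).card = F'.card - 1 := Finset.card_erase_of_mem hv
        have hpos : 1 ≤ F'.card := Finset.card_pos.mpr ⟨_, hv⟩
        have : F.card = F'.card - 1 := by rw [heq, hcard]
        omega
      · have hGmem : F' ∈ D (m+1) := by
          rw [hast (m+1) (by omega) hm]
          exact Finset.mem_filter.mpr ⟨hF'mem, hv⟩
        have := hmax F' hGmem hsubF
        subst this
        omega
  have extend : ∀ m, m + 1 ≤ i → ∀ μ ∈ D m, μ.card + m + 1 < k →
      insert (v (m+1)) μ ∈ D m := by
    intro m hm μ hμ hcard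
    obtain ⟨F, hμF, hFmem, hFmax⟩ := exists_facet m (by omega) μ hμ
    have hkF : k ≤ F.card + m := facet_card m (by omega) F hFmem hFmax
    by_cases hv : v (m+1) ∈ F
    · exact hdown m (by omega) F hFmem _ (Finset.insert_subset hv hμF)
    · have hns : ¬ F ⊆ μ := by
        intro h
        have := Finset.card_le_card h
        omega
      obtain ⟨w, hwF, hwμ⟩ := Finset.not_subset.mp hns
      have hF2 : insert (v (m+1)) (F.erase w) ∈ D m := hnc (m+1) (by omega) hm F hFmem w hwF
      refine hdown m (by omega) _ hF2 _ ?_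
      exact Finset.insert_subset_insert _
        (fun x hx => Finset.mem_erase.mpr ⟨fun h => hwμ (h ▸ hx), hμF hx⟩)
  intro s hs σ hσ hσcard j t hj1 hji hjt htn hvt hvj
  set σ' := insert (v j) (σ.erase (v t)) with hσ'def
  have hσ'card : σ'.card ≤ s + 1 := by
    have h1 : σ'.card ≤ (σ.erase (v t)).card + 1 := Finset.card_insert_le _ _
    have h2 : (σ.erase (v t)).card = σ.card - 1 := Finset.card_erase_of_mem hvt
    have h3 : 1 ≤ σ.card := Finset.card_pos.mpr ⟨_, hvt⟩
    omega
  set A := (Finset.Icc 1 (j-1)).image v with hAdef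
  have hnotA : ∀ a, 1 ≤ a → a ≤ n → j ≤ a → v a ∉ A := by
    intro a ha1 ha2 hja hmem
    rw [hAdef, Finset.mem_image] at hmem
    obtain ⟨l, hl, hlv⟩ := hmem
    rw [Finset.mem_Icc] at hl
    have := hinj' l a hl.1 (by omega) ha1 ha2 hlv
    omega
  have hσ0 : σ \ A ∈ D (j-1) := by
    rw [Dchar (j-1) (by omega) _]
    constructor
    · have h0 : σ \ A ∈ D 0 := hdown 0 (by omega) σ (by rw [hD0]; exact hσ) _ Finset.sdiff_subset
      rw [hD0] at h0
      exact h0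
    · intro l hl1 hl2 hmem
      rw [Finset.mem_sdiff] at hmem
      exact hmem.2 (Finset.mem_image.mpr ⟨l, Finset.mem_Icc.mpr ⟨hl1, hl2⟩, rfl⟩)
  have hvt0 : v t ∈ σ \ A := Finset.mem_sdiff.mpr ⟨hvt, hnotA t (by omega) htn (by omega)⟩
  have hρ : insert (v j) ((σ \ A).erase (v t)) ∈ D (j-1) := hnc j hj1 hji _ hσ0 _ hvt0
  have hvjA : v j ∉ A := hnotA j hj1 (by omega) le_rfl
  have hρeq : σ' \ A = insert (v j) ((σ \ A).erase (v t)) := by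
    ext x
    simp only [hσ'def, Finset.mem_sdiff, Finset.mem_insert, Finset.mem_erase]
    by_cases hx : x = v j
    · subst hx; simp [hvjA]
    · tauto
  have hρ' : σ' \ A ∈ D (j-1) := by rw [hρeq]; exact hρ
  have key : ∀ m, m ≤ j - 1 → σ' \ (Finset.Icc 1 m).image v ∈ D m → σ' ∈ Δ := by
    intro m
    induction m with
    | zero =>
      intro _ h
      have : Finset.Icc 1 0 = (∅ : Finset ℕ) := by
        ext l; simp [Finset.mem_Icc]
      rw [this, Finset.image_empty, Finset.sdiff_empty, hD0] at h
      exact h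
    | succ m ih =>
      intro hm hmem
      apply ih (by omega)
      have himg : (Finset.Icc 1 (m+1)).image v = insert (v (m+1)) ((Finset.Icc 1 m).image v) := by
        have : Finset.Icc 1 (m+1) = insert (m+1) (Finset.Icc 1 m) := by
          ext l; simp [Finset.mem_Icc]; omega
        rw [this, Finset.image_insert]
      by_cases hc : v (m+1) ∈ σ'
      · have hvm : v (m+1) ∉ (Finset.Icc 1 m).image v := by
          intro h
          rw [Finset.mem_image] at h
          obtain ⟨l, hl, hlv⟩ := h
          rw [Finset.mem_Icc] at hl
          have := hinj' l (m+1) hl.1 (by omega) (by omega) (by omega) hlv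
          omega
        have heq : σ' \ (Finset.Icc 1 m).image v
            = insert (v (m+1)) (σ' \ (Finset.Icc 1 (m+1)).image v) := by
          rw [himg]
          ext x
          simp only [Finset.mem_sdiff, Finset.mem_insert, not_or]
          by_cases hx : x = v (m+1)
          · subst hx; simp [hc, hvm]
          · tauto
        rw [heq]
        apply extend m (by omega) _ (hsub m (by omega) hmem)
        have hc1 : (σ' \ (Finset.Icc 1 (m+1)).image v).card ≤ σ'.card :=
          Finset.card_le_card (Finset.sdiff_subset)
        omega
      · have heq : σ' \ (Finset.Icc 1 m).image v = σ' \ (Finset.Icc 1 (m+1)).image v := by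
          rw [himg]
          ext x
          simp only [Finset.mem_sdiff, Finset.mem_insert, not_or]
          by_cases hx : x = v (m+1)
          · subst hx; simp [hc]
          · tauto
        rw [heq]
        exact hsub m (by omega) hmem
  exact ⟨key (j-1) le_rfl hρ', hσ'card⟩
end

section
/- Let Δ be a shifted simplicial complex on ordered vertex set v_1 < v_2 < … < v_n and let t ≤ r be natural numbers. Then among all t-element faces σ of Δ, the face {v_1, …, v_t} (if it is a face) maximizes the number of r-element faces of Δ containing σ; that is, for every t-element face σ of Δ, the number of r-faces of Δ containing σ is at most the number of r-faces of Δ containing {v_1,…,v_t}. -/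
/-!
Replacing a vertex `i` of `σ` by a smaller vertex `j` cannot decrease the number of `r`-faces
containing `σ`: an `r`-face `F ⊇ σ` is kept if `j ∈ F` and otherwise shifted to
`insert j (F.erase i)`, a face by shiftedness; `F` is recovered from its image, which misses `i`
exactly when `F` was shifted. Exchanging the elements of `σ` outside the
initial segment `τ = {v_1, …, v_t}` one by one for the missing elements of `τ` reaches `τ`.
-/

open Finset

variable {α : Type*} [DecidableEq α]

def IsShifted [LT α] (Δ : Finset (Finset α)) : Prop :=
  ∀ σ ∈ Δ, ∀ i ∈ σ, ∀ j, j < i → insert j (σ.erase i) ∈ Δ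

/-- `#(cofaces Δ r σ)` is the paper's `f_{r - #σ}(lk_Δ σ)`. -/
def cofaces (Δ : Finset (Finset α)) (r : ℕ) (σ : Finset α) : Finset (Finset α) :=
  Δ.filter fun F => #F = r ∧ σ ⊆ F

lemma card_insert_erase {s : Finset α} {i j : α} (hi : i ∈ s) (hj : j ∉ s) :
    #(insert j (s.erase i)) = #s := by
  rw [card_insert_of_notMem (fun h => hj (mem_of_mem_erase h)), card_erase_add_one hi]

lemma card_cofaces_le_card_cofaces_insert_erase [Preorder α] {Δ : Finset (Finset α)}
    (hΔ : IsShifted Δ) (r : ℕ) {σ : Finset α} {i j : α} (hi : i ∈ σ) (hji : j < i) :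
    #(cofaces Δ r σ) ≤ #(cofaces Δ r (insert j (σ.erase i))) := by
  let shift : Finset α → Finset α := fun F => if j ∈ F then F else insert j (F.erase i)
  let unshift : Finset α → Finset α := fun G => if i ∈ G then G else insert i (G.erase j)
  refine card_le_card_of_injOn shift (fun F hF => ?_)
    (Set.LeftInvOn.injOn (f₁' := unshift) fun F hF => ?_)
  all_goals
    obtain ⟨hFΔ, hFr, hσF⟩ := mem_filter.mp hF
    have hiF : i ∈ F := hσF hi
  · simp only [coe_filter, cofaces, Set.mem_ofPred_eq, shift]
    split_ifs with hjF
    · exact ⟨hFΔ, hFr, insert_subset hjF ((erase_subset_erase i hσF).trans (erase_subset ..))⟩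
    · exact ⟨hΔ F hFΔ i hiF j hji, hFr ▸ card_insert_erase hiF hjF,
        insert_subset_insert _ (erase_subset_erase i hσF)⟩
  · have hij : i ≠ j := hji.ne'
    by_cases hjF : j ∈ F
    · simp [shift, unshift, hjF, hiF]
    · have hj : j ∉ F.erase i := fun h => hjF (mem_of_mem_erase h)
      simp [shift, unshift, hjF, hij, erase_insert hj, insert_erase hiF]

lemma card_cofaces_le_card_cofaces_of_forall_lt [Preorder α] {Δ : Finset (Finset α)}
    (hΔ : IsShifted Δ) (r : ℕ) {σ τ : Finset α} (hτ : ∀ j ∈ τ, ∀ i ∉ τ, j < i)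
    (hστ : #σ = #τ) : #(cofaces Δ r σ) ≤ #(cofaces Δ r τ) := by
  induction hk : #(σ \ τ) generalizing σ with
  | zero =>
    have hsub : σ ⊆ τ := sdiff_eq_empty_iff_subset.mp (card_eq_zero.mp hk)
    rw [eq_of_subset_of_card_le hsub hστ.ge]
  | succ k ih =>
    obtain ⟨i, hi⟩ := card_pos.mp (hk ▸ k.succ_pos : 0 < #(σ \ τ))
    obtain ⟨j, hj⟩ : (τ \ σ).Nonempty := by
      rw [← card_pos, ← card_sdiff_comm hστ]; omega
    obtain ⟨hiσ, hiτ⟩ := mem_sdiff.mp hi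
    obtain ⟨hjτ, hjσ⟩ := mem_sdiff.mp hj
    calc #(cofaces Δ r σ)
        ≤ #(cofaces Δ r (insert j (σ.erase i))) :=
          card_cofaces_le_card_cofaces_insert_erase hΔ r hiσ (hτ j hjτ i hiτ)
      _ ≤ #(cofaces Δ r τ) := by
          refine ih (by rw [card_insert_erase hiσ hjσ, hστ]) ?_
          rw [insert_sdiff_of_mem _ hjτ, erase_sdiff_comm, card_erase_of_mem hi, hk, Nat.add_sub_cancel]

theorem shifted_initial_face_maximizes_general (n t r : ℕ)
    (Δ : Finset (Finset (Fin n)))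
    (hshift : ∀ σ ∈ Δ, ∀ i ∈ σ, ∀ j, j < i → insert j (σ.erase i) ∈ Δ)
    (σ : Finset (Fin n)) (hσcard : σ.card = t) :
    (Δ.filter (fun F => F.card = r ∧ σ ⊆ F)).card ≤
      (Δ.filter (fun F =>
        F.card = r ∧ (Finset.univ.filter (fun x : Fin n => (x : ℕ) < t)) ⊆ F)).card := by
  have htn : t ≤ n := hσcard ▸ card_le_univ σ |>.trans_eq (Fintype.card_fin n)
  refine card_cofaces_le_card_cofaces_of_forall_lt hshift r (fun j hj i hi => ?_) ?_
  · simp only [mem_filter, mem_univ, true_and, not_lt] at hj hi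
    exact Fin.lt_def.mpr (hj.trans_le hi)
  · rw [Fin.card_filter_val_lt, min_eq_right htn, hσcard]

/-- In a shifted complex, the initial `t`-set `{v_1, …, v_t}` maximizes the
number of `r`-faces containing a given `t`-face. -/
theorem shifted_initial_face_maximizes (n t r : ℕ) (ht : t ≤ r)
    (Δ : Finset (Finset (Fin n)))
    (hdown : ∀ s ∈ Δ, ∀ s' ⊆ s, s' ∈ Δ)
    (hshift : ∀ σ ∈ Δ, ∀ i ∈ σ, ∀ j, j < i → insert j (σ.erase i) ∈ Δ)
    (σ : Finset (Fin n)) (hσ : σ ∈ Δ) (hσcard : σ.card = t) :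
    (Δ.filter (fun F => F.card = r ∧ σ ⊆ F)).card ≤
      (Δ.filter (fun F =>
        F.card = r ∧ (Finset.univ.filter (fun x : Fin n => (x : ℕ) < t)) ⊆ F)).card :=
  shifted_initial_face_maximizes_general n t r Δ hshift σ hσcard
end

section
/- Let A be a t-intersecting family of r-element subsets of the ordered set {v_1,…,v_n}, let W = {v_{n−t+1},…,v_n}, and suppose the complex generated by A is shifted, r > t, and n > r + t. Then for every subset U ⊆ W with |U| > r − t, no member σ of A satisfies σ ∩ W = U. -/
/-!
Push the part `U` of `σ` lying in the top block `W` down, one vertex at a time, onto vertices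
outside `W ∪ σ`; since `n > r + t` there are enough of them. Because `A` is `r`-uniform, each
shifted set, being an `r`-set contained in a member of `A`, is itself a member of `A`. The final
set meets `σ` only in `σ \ U`, which has `r - |U| < t` elements, contradicting `t`-intersection.
-/

open Finset

variable {α : Type*} [LinearOrder α]

/-- The simplicial complex generated by `A` (all subsets of members of `A`) is shifted. -/
def GeneratesShiftedComplex (A : Finset (Finset α)) : Prop :=
  ∀ σ : Finset α, (∃ a ∈ A, σ ⊆ a) → ∀ i ∈ σ, ∀ j, j < i → ∃ a ∈ A, insert j (σ.erase i) ⊆ a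

namespace GeneratesShiftedComplex

variable {A : Finset (Finset α)} {r : ℕ}

theorem insert_erase_mem (hA : GeneratesShiftedComplex A) (hr : (A : Set (Finset α)).Sized r)
    {τ : Finset α} (hτ : τ ∈ A) {i j : α} (hi : i ∈ τ) (hj : j ∉ τ) (hji : j < i) :
    insert j (τ.erase i) ∈ A := by
  obtain ⟨a, ha, hsub⟩ := hA τ ⟨τ, hτ, subset_rfl⟩ i hi j hji
  have hcard : #(insert j (τ.erase i)) = #a := by
    rw [card_insert_of_notMem fun h ↦ hj (mem_of_mem_erase h), card_erase_add_one hi, hr hτ, hr ha]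
  rwa [eq_of_subset_of_card_le hsub hcard.ge]

theorem sdiff_union_mem (hA : GeneratesShiftedComplex A) (hr : (A : Set (Finset α)).Sized r)
    {τ S T : Finset α} (hτ : τ ∈ A) (hS : S ⊆ τ) (hT : Disjoint T τ) (hcard : #T = #S)
    (hlt : ∀ j ∈ T, ∀ i ∈ S, j < i) : τ \ S ∪ T ∈ A := by
  induction S using Finset.induction_on generalizing T with
  | empty => simp_all
  | insert i S hiS ih =>
    obtain ⟨j, hjT⟩ : T.Nonempty := card_pos.1 (by simp [hcard, hiS])
    have hj : j ∉ τ := disjoint_left.1 hT hjT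
    have hji : j < i := hlt j hjT i (mem_insert_self i S)
    have hprev : τ \ S ∪ T.erase j ∈ A :=
      ih (insert_subset_iff.1 hS).2 (hT.mono_left (erase_subset j T))
        (by simp [card_erase_of_mem hjT, hcard, hiS])
        fun j' hj' i' hi' ↦ hlt j' (mem_of_mem_erase hj') i' (mem_insert_of_mem hi')
    have hiT : i ∉ T := fun h ↦ (hlt i h i (mem_insert_self i S)).false
    have hshift := hA.insert_erase_mem hr hprev (i := i) (j := j)
      (by simp [hiS, hS (mem_insert_self i S)]) (by simp [hj]) hji
    convert hshift using 1
    ext x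
    simp only [mem_union, mem_sdiff, mem_insert, mem_erase]
    by_cases hxi : x = i
    · subst hxi; simp [hiT, hji.ne']
    · by_cases hxj : x = j
      · subst hxj; simp [hjT, hji.ne]
      · simp [hxi, hxj]

end GeneratesShiftedComplex

theorem Fin.card_filter_le_val (n m : ℕ) : #{x : Fin n | m ≤ (x : ℕ)} = n - m := by
  have := card_filter_add_card_filter_not (s := (univ : Finset (Fin n))) fun x : Fin n ↦ m ≤ (x : ℕ)
  simp only [not_le, Fin.card_filter_val_lt, card_univ, Fintype.card_fin] at this
  omega

theorem no_large_top_intersection_general (n t r : ℕ) (hn : r + t < n)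
    (A : Finset (Finset (Fin n)))
    (hr : ∀ X ∈ A, X.card = r)
    (hint : ∀ X ∈ A, ∀ Y ∈ A, t ≤ (X ∩ Y).card)
    (hshift : ∀ σ : Finset (Fin n), (∃ a ∈ A, σ ⊆ a) →
      ∀ i ∈ σ, ∀ j, j < i → ∃ a ∈ A, insert j (σ.erase i) ⊆ a) :
    ∀ U ⊆ Finset.univ.filter (fun x : Fin n => n - t ≤ (x : ℕ)),
      r < U.card + t →
        ∀ σ ∈ A, σ ∩ Finset.univ.filter (fun x : Fin n => n - t ≤ (x : ℕ)) ≠ U := by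
  intro U hUW hU σ hσ hσU
  set W := univ.filter fun x : Fin n ↦ n - t ≤ (x : ℕ)
  have hUσ : U ⊆ σ := hσU ▸ inter_subset_left
  have hfree : #U ≤ #(W ∪ σ)ᶜ := by
    have hW : #W = n - (n - t) := Fin.card_filter_le_val n (n - t)
    have hunion := card_union_add_card_inter σ W
    rw [hσU, hr σ hσ, union_comm] at hunion
    rw [card_compl, Fintype.card_fin]
    omega
  obtain ⟨T, hTfree, hTcard⟩ := exists_subset_card_eq hfree
  have hT : ∀ j ∈ T, j ∉ W ∧ j ∉ σ := fun j hj ↦ by simpa using hTfree hj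
  have hτ : σ \ U ∪ T ∈ A :=
    GeneratesShiftedComplex.sdiff_union_mem hshift hr hσ hUσ
      (disjoint_left.2 fun j hj ↦ (hT j hj).2) hTcard fun j hj i hi ↦ by
        have hjW := (hT j hj).1
        have hiW := hUW hi
        simp only [W, mem_filter, mem_univ, true_and, not_le] at hjW hiW
        exact Fin.lt_def.2 (hjW.trans_le hiW)
  have hmeet : σ ∩ (σ \ U ∪ T) ⊆ σ \ U := fun x hx ↦ by
    simp only [mem_inter, mem_union] at hx
    exact hx.2.resolve_right fun hxT ↦ (hT x hxT).2 hx.1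
  have hsmall := (hint σ hσ _ hτ).trans (card_le_card hmeet)
  rw [card_sdiff_of_subset hUσ, hr σ hσ] at hsmall
  have hUr : #U ≤ r := hr σ hσ ▸ card_le_card hUσ
  omega

/-- Case 1 of the shifted EKR argument: if the complex generated by a shifted
`t`-intersecting family `A` of `r`-sets is shifted, `r > t` and `n > r + t`,
then no member of `A` meets the top `t` vertices `W` in a set `U` with
`|U| > r - t` (i.e. `r < |U| + t`). -/
theorem no_large_top_intersection (n t r : ℕ) (htr : t < r) (hn : r + t < n)
    (A : Finset (Finset (Fin n)))
    (hr : ∀ X ∈ A, X.card = r)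
    (hint : ∀ X ∈ A, ∀ Y ∈ A, t ≤ (X ∩ Y).card)
    (hshift : ∀ σ : Finset (Fin n), (∃ a ∈ A, σ ⊆ a) →
      ∀ i ∈ σ, ∀ j, j < i → ∃ a ∈ A, insert j (σ.erase i) ⊆ a) :
    ∀ U ⊆ Finset.univ.filter (fun x : Fin n => n - t ≤ (x : ℕ)),
      r < U.card + t →
        ∀ σ ∈ A, σ ∩ Finset.univ.filter (fun x : Fin n => n - t ≤ (x : ℕ)) ≠ U :=
  no_large_top_intersection_general n t r hn A hr hint hshift
end

section
/- Let A be a shifted t-intersecting family of r-element subsets of ordered set {v_1,…,v_n} with n ≥ 2r, r > t, and let W = {v_{n−t+1},…,v_n}. For U ⊆ W with |U| ≤ r − t, let C'_U = {σ \ U : σ ∈ A, σ ∩ W = U}. Then C'_U is a t-intersecting family of (r−|U|)-element sets (provided it is nonempty). -/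
open Finset

/-- Case 2 of the shifted EKR argument: for a shifted `t`-intersecting family
`A` of `r`-sets with `n ≥ 2r`, `r > t`, and `U` a subset of the top `t`
vertices `W` with `|U| ≤ r - t`, the family `C'_U = {σ \ U : σ ∈ A, σ ∩ W = U}`
is a `t`-intersecting family of `(r - |U|)`-sets. -/
theorem truncated_family_t_intersecting (n t r : ℕ) (htr : t < r) (hn : 2 * r ≤ n)
    (A : Finset (Finset (Fin n)))
    (hr : ∀ X ∈ A, X.card = r)
    (hint : ∀ X ∈ A, ∀ Y ∈ A, t ≤ (X ∩ Y).card)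
    (hshift : ∀ σ ∈ A, ∀ i ∈ σ, ∀ j, j < i → j ∉ σ → insert j (σ.erase i) ∈ A)
    (W : Finset (Fin n)) (hW : W = Finset.univ.filter (fun x : Fin n => n - t ≤ (x : ℕ)))
    (U : Finset (Fin n)) (hU : U ⊆ W) (hUcard : U.card + t ≤ r) :
    ∀ X Y : Finset (Fin n),
      (∃ σ ∈ A, σ ∩ W = U ∧ X = σ \ U) →
      (∃ τ ∈ A, τ ∩ W = U ∧ Y = τ \ U) →
        t ≤ (X ∩ Y).card ∧ X.card = r - U.card := by
  rintro X Y ⟨σ, hσA, hσW, rfl⟩ ⟨τ, hτA, hτW, rfl⟩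
  have hUσ : U ⊆ σ := hσW ▸ inter_subset_left
  have hUτ : U ⊆ τ := hτW ▸ inter_subset_left
  have htn : t ≤ n := by omega
  -- membership in W
  have hmemW : ∀ x : Fin n, x ∈ W ↔ n - t ≤ (x : ℕ) := by
    intro x; rw [hW]; simp
  -- card of W
  have hWcard : W.card = t := by
    rcases Nat.eq_zero_or_pos t with ht0 | ht0
    · subst ht0
      have : W = ∅ := by
        ext x; simp only [hmemW, notMem_empty, iff_false, Nat.sub_zero]
        exact Nat.not_le.mpr x.isLt
      simp [this]
    · have hlt : n - t < n := by omega
      have : W = Finset.Ici (⟨n - t, hlt⟩ : Fin n) := by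
        ext x; rw [hmemW, Finset.mem_Ici, Fin.le_def]
      rw [this, Fin.card_Ici]
      show n - (n - t) = t
      omega
  -- the target intersection
  have hXY : (σ \ U) ∩ (τ \ U) = (σ ∩ τ) \ U := by
    ext x; simp only [mem_inter, mem_sdiff]; tauto
  have hσU : σ \ W = σ \ U := by
    ext x
    simp only [mem_sdiff]
    constructor
    · rintro ⟨hx, hxW⟩; exact ⟨hx, fun hxU => hxW (hU hxU)⟩
    · rintro ⟨hx, hxU⟩
      refine ⟨hx, fun hxW => hxU ?_⟩
      rw [← hσW]; exact mem_inter.mpr ⟨hx, hxW⟩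
  have hτU : τ \ W = τ \ U := by
    ext x
    simp only [mem_sdiff]
    constructor
    · rintro ⟨hx, hxW⟩; exact ⟨hx, fun hxU => hxW (hU hxU)⟩
    · rintro ⟨hx, hxU⟩
      refine ⟨hx, fun hxW => hxU ?_⟩
      rw [← hτW]; exact mem_inter.mpr ⟨hx, hxW⟩
  have hσcard : (σ \ W).card = r - U.card := by
    rw [hσU, card_sdiff_of_subset hUσ, hr σ hσA]
  have hτcard : (τ \ W).card = r - U.card := by
    rw [hτU, card_sdiff_of_subset hUτ, hr τ hτA]
  refine ⟨?_, by rw [card_sdiff_of_subset hUσ, hr σ hσA]⟩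
  rw [hXY]
  -- set of fresh elements
  set D : Finset (Fin n) := (univ \ W) \ (σ ∪ τ) with hD
  have hDmem : ∀ x : Fin n, x ∈ D ↔ x ∉ W ∧ x ∉ σ ∧ x ∉ τ := by
    intro x; simp only [hD, mem_sdiff, mem_union, mem_univ, true_and]; tauto
  -- counting: |D| ≥ |U|
  have k := ((σ ∩ τ) \ W).card
  have hinterW : (σ ∩ τ) ∩ W = U := by
    rw [inter_assoc, hτW, inter_eq_right.mpr hUσ]
  have hintercard : U.card + ((σ ∩ τ) \ W).card = (σ ∩ τ).card := by
    rw [← hinterW]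
    exact card_inter_add_card_sdiff _ _
  have htk : t ≤ U.card + ((σ ∩ τ) \ W).card := by
    rw [hintercard]; exact hint σ hσA τ hτA
  have hunion : ((σ ∪ τ) \ W).card + ((σ ∩ τ) \ W).card = (r - U.card) + (r - U.card) := by
    have h1 : (σ ∪ τ) \ W = (σ \ W) ∪ (τ \ W) := by
      ext x; simp only [mem_sdiff, mem_union]; tauto
    have h2 : (σ ∩ τ) \ W = (σ \ W) ∩ (τ \ W) := by
      ext x; simp only [mem_sdiff, mem_inter]; tauto
    rw [h1, h2, card_union_add_card_inter, hσcard, hτcard]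
  have hDcard : U.card ≤ D.card := by
    have hsub : (σ ∪ τ) \ W ⊆ univ \ W := by
      intro x hx; simp only [mem_sdiff] at *; exact ⟨mem_univ x, hx.2⟩
    have hDeq : D = (univ \ W) \ ((σ ∪ τ) \ W) := by
      ext x
      simp only [hDmem, mem_sdiff, mem_union, mem_univ, true_and]
      tauto
    have huWcard : (univ \ W).card = n - t := by
      rw [card_sdiff_of_subset (subset_univ W), hWcard, card_univ, Fintype.card_fin]
    rw [hDeq, card_sdiff_of_subset hsub, huWcard]
    omega
  -- key induction: shift away the elements of U
  have key : ∀ m : ℕ, ∀ σ' ∈ A, σ' ∩ τ ⊆ σ ∩ τ → (σ' ∩ U).card = m →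
      m ≤ (D \ σ').card → t ≤ ((σ ∩ τ) \ U).card := by
    intro m
    induction m with
    | zero =>
      intro σ' hσ'A hsub hcard _
      have hempty : σ' ∩ U = ∅ := card_eq_zero.mp hcard
      have : σ' ∩ τ ⊆ (σ ∩ τ) \ U := by
        intro x hx
        rw [mem_sdiff]
        refine ⟨hsub hx, fun hxU => ?_⟩
        have : x ∈ σ' ∩ U := mem_inter.mpr ⟨(mem_inter.mp hx).1, hxU⟩
        rw [hempty] at this
        exact notMem_empty x this
      exact le_trans (hint σ' hσ'A τ hτA) (card_le_card this)
    | succ m ih =>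
      intro σ' hσ'A hsub hcard hfresh
      -- pick u ∈ σ' ∩ U
      obtain ⟨u, hu⟩ : ∃ u, u ∈ σ' ∩ U := by
        rcases Finset.card_pos.mp (by omega : 0 < (σ' ∩ U).card) with ⟨u, hu⟩
        exact ⟨u, hu⟩
      obtain ⟨huσ', huU⟩ := mem_inter.mp hu
      -- pick fresh j ∈ D \ σ'
      obtain ⟨j, hj⟩ : ∃ j, j ∈ D \ σ' := by
        rcases Finset.card_pos.mp (by omega : 0 < (D \ σ').card) with ⟨j, hj⟩
        exact ⟨j, hj⟩
      obtain ⟨hjD, hjσ'⟩ := mem_sdiff.mp hj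
      obtain ⟨hjW, hjσ, hjτ⟩ := (hDmem j).mp hjD
      have hjltu : j < u := by
        rw [Fin.lt_def]
        have h1 : ¬ (n - t ≤ (j : ℕ)) := fun h => hjW ((hmemW j).mpr h)
        have h2 : n - t ≤ (u : ℕ) := (hmemW u).mp (hU huU)
        omega
      set σ'' := insert j (σ'.erase u) with hσ''
      have hσ''A : σ'' ∈ A := hshift σ' hσ'A u huσ' j hjltu hjσ'
      have hjU : j ∉ U := fun h => hjW (hU h)
      apply ih σ'' hσ''A
      · -- σ'' ∩ τ ⊆ σ ∩ τ
        intro x hx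
        obtain ⟨hxσ'', hxτ⟩ := mem_inter.mp hx
        rcases mem_insert.mp hxσ'' with rfl | hxe
        · exact absurd hxτ hjτ
        · exact hsub (mem_inter.mpr ⟨mem_of_mem_erase hxe, hxτ⟩)
      · -- (σ'' ∩ U).card = m
        have : σ'' ∩ U = (σ' ∩ U).erase u := by
          ext x
          simp only [hσ'', mem_inter, mem_insert, mem_erase]
          constructor
          · rintro ⟨rfl | ⟨hne, hxσ'⟩, hxU⟩
            · exact absurd hxU hjU
            · exact ⟨hne, hxσ', hxU⟩
          · rintro ⟨hne, hxσ', hxU⟩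
            exact ⟨Or.inr ⟨hne, hxσ'⟩, hxU⟩
        rw [this, card_erase_of_mem hu, hcard]; omega
      · -- m ≤ (D \ σ'').card
        have hss : (D \ σ').erase j ⊆ D \ σ'' := by
          intro x hx
          obtain ⟨hne, hx2⟩ := mem_erase.mp hx
          obtain ⟨hxD, hxσ'⟩ := mem_sdiff.mp hx2
          rw [mem_sdiff]
          refine ⟨hxD, fun hx'' => ?_⟩
          rcases mem_insert.mp hx'' with rfl | hxe
          · exact hne rfl
          · exact hxσ' (mem_of_mem_erase hxe)
        calc m = (m + 1) - 1 := by omega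
          _ ≤ (D \ σ').card - 1 := by omega
          _ = ((D \ σ').erase j).card := (card_erase_of_mem hj).symm
          _ ≤ (D \ σ'').card := card_le_card hss
  -- apply key with σ
  apply key U.card σ hσA (Finset.Subset.refl _)
  · rw [inter_eq_right.mpr hUσ]
  · have : D \ σ = D := by
      ext x
      simp only [mem_sdiff, hDmem]
      tauto
    rw [this]; exact hDcard
end
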